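/- arXiv:1512.06962 — 5 statements merged into one kernel-verified Lean document; each statement's English description precedes it below -/
import Mathlib

section
/- Suppose M₁ and M₂ are B(H)-valued functions analytic on a punctured disk D(z₀;ε₀)\{z₀}, each finitely meromorphic at z₀ (their principal parts at z₀ are finite Laurent sums with finite-rank coefficients). Then the products M₁M₂ and M₂M₁ are finitely meromorphic at z₀, and for sufficiently small ε > 0 the contour integrals ∮_{C(z₀;ε)} M₁(ζ)M₂(ζ) dζ and ∮_{C(z₀;ε)} M₂(ζ)M₁(ζ) dζ are finite-rank operators with equal traces. -/
open scoped Real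

variable {H : Type*} [NormedAddCommGroup H] [InnerProductSpace ℂ H] [CompleteSpace H]

/-- A bounded operator has finite rank. -/
def FinRank (T : H →L[ℂ] H) : Prop :=
  FiniteDimensional ℂ (LinearMap.range (T : H →ₗ[ℂ] H))

/-- `P` is the principal part at `z₀` of the `B(H)`-valued function `M`, on a disk of
radius `ε₀`: `P` is a finite Laurent sum `∑_{k=1}^{N} (z - z₀)^{-k} • A_k` with
finite-rank coefficients `A_k`, and `M - P` extends to a function analytic on the whole
disk.  In particular `M` is finitely meromorphic at `z₀`. -/
def IsPrincipalPartAt (M : ℂ → H →L[ℂ] H) (z₀ : ℂ) (ε₀ : ℝ) (P : ℂ → H →L[ℂ] H) : Prop :=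
  ∃ (N : ℕ) (A : ℕ → H →L[ℂ] H) (g : ℂ → H →L[ℂ] H),
    (∀ k, k < N → FinRank (A k)) ∧
    AnalyticOnNhd ℂ g (Metric.ball z₀ ε₀) ∧
    (∀ z, P z = ∑ k ∈ Finset.range N, ((z - z₀) ^ (-(k + 1 : ℤ))) • A k) ∧
    (∀ z ∈ Metric.ball z₀ ε₀ \ {z₀}, M z = g z + P z)

/-- `M` is finitely meromorphic at `z₀` (on the disk of radius `ε₀`): it is analytic on
the punctured disk and its principal part at `z₀` is a finite Laurent sum with
finite-rank coefficients. -/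
def FinitelyMeromorphicAt (M : ℂ → H →L[ℂ] H) (z₀ : ℂ) (ε₀ : ℝ) : Prop :=
  ∃ P : ℂ → H →L[ℂ] H, IsPrincipalPartAt M z₀ ε₀ P

/-!
On the punctured disk write `Mᵢ = gᵢ + Pᵢ` with `gᵢ` analytic on the disk and `Pᵢ` a Laurent
polynomial in `(z - z₀)⁻¹` with finite-rank coefficients (`A` for `M₁`, `B` for `M₂`).
In `M₁M₂ = g₁g₂ + g₁P₂ + P₁g₂ + P₁P₂` the first term is analytic, the last is again such a
Laurent polynomial, and a Taylor expansion of `g₁` of order `k + 1` splits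
`(z - z₀)^{-(k+1)} g₁(z) B k` into an analytic part and poles with coefficients `c_j * B k`,
`c_j` the Taylor coefficients of `g₁`.

On a circle `C(z₀, ε)`, Cauchy's theorem kills `g₁g₂`, `P₁P₂` has no `(z - z₀)⁻¹` term, and the
mixed terms give `∮ M₁M₂ = ∑ₖ A k * C₂ k + ∑ₗ C₁ l * B l` with
`Cᵢ k = ∮ (ζ - z₀)^{-(k+1)} gᵢ(ζ) dζ`, while `∮ M₂M₁ = ∑ₗ B l * C₁ l + ∑ₖ C₂ k * A k`.
Each term has a finite-rank factor, and `tr (XY) = tr (YX)` matches the two sums term by term.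
-/

open Metric

namespace FinRank

variable {E : Type*} [NormedAddCommGroup E] [InnerProductSpace ℂ E] {S T : E →L[ℂ] E}

theorem of_range_le (hS : FinRank S)
    (h : LinearMap.range (T : E →ₗ[ℂ] E) ≤ LinearMap.range (S : E →ₗ[ℂ] E)) : FinRank T :=
  have : FiniteDimensional ℂ (LinearMap.range (S : E →ₗ[ℂ] E)) := hS
  Submodule.finiteDimensional_of_le h

theorem zero : FinRank (0 : E →L[ℂ] E) := by
  rw [FinRank, ContinuousLinearMap.toLinearMap_zero, LinearMap.range_zero]
  infer_instance

theorem add (hS : FinRank S) (hT : FinRank T) : FinRank (S + T) :=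
  have : FiniteDimensional ℂ (LinearMap.range (S : E →ₗ[ℂ] E)) := hS
  have : FiniteDimensional ℂ (LinearMap.range (T : E →ₗ[ℂ] E)) := hT
  Submodule.finiteDimensional_of_le (LinearMap.range_add_le _ _)

theorem sum {ι : Type*} {s : Finset ι} {F : ι → E →L[ℂ] E} (hF : ∀ i ∈ s, FinRank (F i)) :
    FinRank (∑ i ∈ s, F i) :=
  Finset.sum_induction F FinRank (fun _ _ => add) zero hF

theorem finsuppSum {ι M : Type*} [Zero M] (A : ι →₀ M) {F : ι → M → E →L[ℂ] E}
    (hF : ∀ i, FinRank (F i (A i))) : FinRank (A.sum F) :=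
  sum fun i _ => hF i

theorem mul_right (hS : FinRank S) (T : E →L[ℂ] E) : FinRank (S * T) :=
  hS.of_range_le (LinearMap.range_comp_le_range _ _)

theorem mul_left (S : E →L[ℂ] E) (hT : FinRank T) : FinRank (S * T) := by
  have : FiniteDimensional ℂ (LinearMap.range (T : E →ₗ[ℂ] E)) := hT
  rw [FinRank, ContinuousLinearMap.mul_def, ContinuousLinearMap.toLinearMap_comp,
    LinearMap.range_comp]
  infer_instance

end FinRank

theorem ContinuousLinearMap.trace_mul_comm {E : Type*} [NormedAddCommGroup E] [NormedSpace ℂ E]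
    (S T : E →L[ℂ] E) :
    LinearMap.trace ℂ E (S * T : E →L[ℂ] E) = LinearMap.trace ℂ E (T * S : E →L[ℂ] E) :=
  LinearMap.trace_mul_comm ℂ (S : E →ₗ[ℂ] E) T

section PrincipalPart

variable {E : Type*} [NormedAddCommGroup E] [NormedSpace ℂ E]

/-- Finitely supported coefficients, rather than the `range N`-indexed sums of
`IsPrincipalPartAt`, so that principal parts of different orders add coefficientwise. -/
noncomputable def principalPart (z₀ : ℂ) (A : ℕ →₀ E) (z : ℂ) : E :=
  A.sum fun k a => (z - z₀) ^ (-(k + 1 : ℤ)) • a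

variable {z₀ : ℂ}

@[simp]
theorem principalPart_zero : principalPart z₀ (0 : ℕ →₀ E) = 0 := by
  ext z; simp [principalPart]

theorem principalPart_add (A B : ℕ →₀ E) (z : ℂ) :
    principalPart z₀ (A + B) z = principalPart z₀ A z + principalPart z₀ B z :=
  Finsupp.sum_add_index' (fun _ => smul_zero _) fun _ => smul_add _

theorem principalPart_single (k : ℕ) (a : E) (z : ℂ) :
    principalPart z₀ (Finsupp.single k a) z = (z - z₀) ^ (-(k + 1 : ℤ)) • a :=
  Finsupp.sum_single_index (smul_zero _)

theorem continuousOn_principalPart (A : ℕ →₀ E) : ContinuousOn (principalPart z₀ A) {z₀}ᶜ := by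
  refine continuousOn_finsetSum _ fun k _ => ?_
  exact ((continuousOn_id.sub continuousOn_const).zpow₀ _ fun z hz =>
    Or.inl (sub_ne_zero.2 hz)).smul continuousOn_const

end PrincipalPart

section Taylor

variable {𝕜 E : Type*} [NontriviallyNormedField 𝕜] [NormedAddCommGroup E] [NormedSpace 𝕜 E]

open Function in
theorem sum_pow_smul_iterate_dslope_add (f : 𝕜 → E) (a b : 𝕜) (n : ℕ) :
    ∑ k ∈ Finset.range n, (b - a) ^ k • (swap dslope a)^[k] f a +
      (b - a) ^ n • (swap dslope a)^[n] f b = f b := by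
  induction n with
  | zero => simp
  | succ n ih =>
    rw [Finset.sum_range_succ, add_assoc, iterate_succ_apply', pow_succ, mul_smul, ← smul_add,
      sub_smul_dslope, add_sub_cancel, ih]

theorem AnalyticOnNhd.dslope {f : 𝕜 → E} {U : Set 𝕜} (hf : AnalyticOnNhd 𝕜 f U) (a : 𝕜) :
    AnalyticOnNhd 𝕜 (dslope f a) U := by
  intro z hz
  rcases eq_or_ne z a with rfl | hne
  · obtain ⟨p, hp⟩ := hf z hz
    exact ⟨_, hp.has_fpower_series_dslope_fslope⟩
  · refine AnalyticAt.congr ?_ (dslope_eventuallyEq_slope_of_ne f hne).symm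
    exact ((analyticAt_id.sub analyticAt_const).inv (sub_ne_zero.2 hne)).smul
      ((hf z hz).sub analyticAt_const)

open Function in
theorem AnalyticOnNhd.iterate_dslope {f : 𝕜 → E} {U : Set 𝕜} (hf : AnalyticOnNhd 𝕜 f U) (a : 𝕜)
    (n : ℕ) : AnalyticOnNhd 𝕜 ((swap _root_.dslope a)^[n] f) U := by
  induction n with
  | zero => exact hf
  | succ n ih => rw [iterate_succ_apply']; exact ih.dslope a

end Taylor

namespace FinitelyMeromorphicAt

variable {M M' : ℂ → H →L[ℂ] H} {z₀ : ℂ} {ε₀ : ℝ}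

theorem iff_exists_principalPart : FinitelyMeromorphicAt M z₀ ε₀ ↔
    ∃ (A : ℕ →₀ H →L[ℂ] H) (g : ℂ → H →L[ℂ] H), (∀ k, FinRank (A k)) ∧
      AnalyticOnNhd ℂ g (ball z₀ ε₀) ∧
      ∀ z ∈ ball z₀ ε₀ \ {z₀}, M z = g z + principalPart z₀ A z := by
  constructor
  · rintro ⟨P, N, A, g, hA, hg, hP, hM⟩
    classical
    let A' : ℕ →₀ H →L[ℂ] H := Finsupp.onFinset (Finset.range N) (fun k => if k < N then A k else 0)
      fun k hk => Finset.mem_range.2 (by_contra fun h => hk (if_neg h))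
    refine ⟨A', g, fun k => ?_, hg, fun z hz => ?_⟩
    · by_cases hk : k < N
      · simpa [A', hk] using hA k hk
      · simpa [A', hk] using FinRank.zero
    · rw [hM z hz, hP z, principalPart, Finsupp.onFinset_sum _ fun _ => smul_zero _]
      exact congrArg _ (Finset.sum_congr rfl fun k hk => by simp [Finset.mem_range.1 hk])
  · rintro ⟨A, g, hA, hg, hM⟩
    obtain ⟨N, hN⟩ := Finset.exists_nat_subset_range A.support
    exact ⟨principalPart z₀ A, N, A, g, fun k _ => hA k, hg,
      fun z => Finsupp.sum_of_support_subset A hN _ fun _ _ => smul_zero _, hM⟩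

theorem congr (h : FinitelyMeromorphicAt M z₀ ε₀) (h' : Set.EqOn M' M (ball z₀ ε₀ \ {z₀})) :
    FinitelyMeromorphicAt M' z₀ ε₀ := by
  obtain ⟨P, N, A, g, hA, hg, hP, hM⟩ := h
  exact ⟨P, N, A, g, hA, hg, hP, fun z hz => (h' hz).trans (hM z hz)⟩

theorem of_analyticOnNhd (hM : AnalyticOnNhd ℂ M (ball z₀ ε₀)) : FinitelyMeromorphicAt M z₀ ε₀ :=
  iff_exists_principalPart.2 ⟨0, M, fun _ => FinRank.zero, hM, fun z _ => by simp⟩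

theorem zero : FinitelyMeromorphicAt (0 : ℂ → H →L[ℂ] H) z₀ ε₀ :=
  of_analyticOnNhd analyticOnNhd_const

theorem add (h : FinitelyMeromorphicAt M z₀ ε₀) (h' : FinitelyMeromorphicAt M' z₀ ε₀) :
    FinitelyMeromorphicAt (M + M') z₀ ε₀ := by
  obtain ⟨A, g, hA, hg, hM⟩ := iff_exists_principalPart.1 h
  obtain ⟨A', g', hA', hg', hM'⟩ := iff_exists_principalPart.1 h'
  refine iff_exists_principalPart.2 ⟨A + A', g + g', fun k => (hA k).add (hA' k), hg.add hg',
    fun z hz => ?_⟩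
  rw [Pi.add_apply, hM z hz, hM' z hz, principalPart_add, Pi.add_apply]
  abel

theorem sum {ι : Type*} {s : Finset ι} {F : ι → ℂ → H →L[ℂ] H}
    (hF : ∀ i ∈ s, FinitelyMeromorphicAt (F i) z₀ ε₀) :
    FinitelyMeromorphicAt (∑ i ∈ s, F i) z₀ ε₀ :=
  Finset.sum_induction F (FinitelyMeromorphicAt · z₀ ε₀) (fun _ _ => add) zero hF

theorem zpow_smul {A : H →L[ℂ] H} (hA : FinRank A) {m : ℤ} (hm : m < 0) :
    FinitelyMeromorphicAt (fun z => (z - z₀) ^ m • A) z₀ ε₀ := by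
  obtain ⟨k, rfl⟩ := Int.eq_negSucc_of_lt_zero hm
  classical
  refine iff_exists_principalPart.2 ⟨Finsupp.single k A, 0, fun j => ?_, analyticOnNhd_const,
    fun z _ => by simp [principalPart_single, Int.negSucc_eq]⟩
  rw [Finsupp.single_apply]
  split_ifs
  exacts [hA, FinRank.zero]

open Function in
theorem zpow_smul_comp {F : Type*} [NormedAddCommGroup F] [NormedSpace ℂ F]
    {L : F →L[ℂ] H →L[ℂ] H} (hL : ∀ x, FinRank (L x)) {g : ℂ → F}
    (hg : AnalyticOnNhd ℂ g (ball z₀ ε₀)) (m : ℤ) :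
    FinitelyMeromorphicAt (fun z => (z - z₀) ^ m • L (g z)) z₀ ε₀ := by
  obtain ⟨n, rfl | rfl⟩ := Int.eq_nat_or_neg m
  · simp only [zpow_natCast]
    exact of_analyticOnNhd (((analyticOnNhd_id.sub analyticOnNhd_const).pow n).smul
      (L.comp_analyticOnNhd hg))
  -- Taylor expansion of order `n`: terms of degree `< n` become poles, the remainder is analytic.
  let c k := (swap dslope z₀)^[k] g z₀
  have hpoles : FinitelyMeromorphicAt
      (∑ k ∈ Finset.range n, fun z => (z - z₀) ^ ((k : ℤ) - n) • L (c k)) z₀ ε₀ :=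
    sum fun k hk => zpow_smul (hL _) (by simpa using Finset.mem_range.1 hk)
  refine (hpoles.add (of_analyticOnNhd (L.comp_analyticOnNhd (hg.iterate_dslope z₀ n)))).congr
    fun z hz => ?_
  have hw : z - z₀ ≠ 0 := sub_ne_zero.2 hz.2
  conv_lhs => rw [← sum_pow_smul_iterate_dslope_add g z₀ z n]
  simp only [map_add, map_sum, map_smul, smul_add, Finset.smul_sum, smul_smul, Pi.add_apply,
    Finset.sum_apply, comp_apply]
  congr 1
  · exact Finset.sum_congr rfl fun k _ => by rw [← zpow_natCast, ← zpow_add₀ hw, neg_add_eq_sub]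
  · rw [zpow_neg, zpow_natCast, inv_mul_cancel₀ (pow_ne_zero _ hw), one_smul]

theorem mul {M₁ M₂ : ℂ → H →L[ℂ] H} (h₁ : FinitelyMeromorphicAt M₁ z₀ ε₀)
    (h₂ : FinitelyMeromorphicAt M₂ z₀ ε₀) :
    FinitelyMeromorphicAt (fun z => M₁ z * M₂ z) z₀ ε₀ := by
  obtain ⟨A, g₁, hA, hg₁, hM₁⟩ := iff_exists_principalPart.1 h₁
  obtain ⟨B, g₂, hB, hg₂, hM₂⟩ := iff_exists_principalPart.1 h₂
  have finRank_mul_const : ∀ {b}, FinRank b →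
      ∀ x, FinRank ((ContinuousLinearMap.mul ℂ (H →L[ℂ] H)).flip b x) :=
    fun hb x => FinRank.mul_left x hb
  have finRank_const_mul : ∀ {a}, FinRank a →
      ∀ x, FinRank (ContinuousLinearMap.mul ℂ (H →L[ℂ] H) a x) :=
    fun ha x => ha.mul_right x
  have hprod : FinitelyMeromorphicAt ((fun z => g₁ z * g₂ z) +
      (∑ l ∈ B.support, fun z => (z - z₀) ^ (-(l + 1 : ℤ)) • (g₁ z * B l)) +
      (∑ k ∈ A.support, fun z => (z - z₀) ^ (-(k + 1 : ℤ)) • (A k * g₂ z)) +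
      ∑ k ∈ A.support, ∑ l ∈ B.support,
        fun z => (z - z₀) ^ (-(l + 1 : ℤ) + -(k + 1 : ℤ)) • (A k * B l)) z₀ ε₀ :=
    (((of_analyticOnNhd (hg₁.mul hg₂)).add
        (sum fun l _ => zpow_smul_comp (finRank_mul_const (hB l)) hg₁ _)).add
      (sum fun k _ => zpow_smul_comp (finRank_const_mul (hA k)) hg₂ _)).add
      (sum fun k _ => sum fun l _ => zpow_smul ((hA k).mul_right _) (by omega))
  refine hprod.congr fun z hz => ?_
  have hw : z - z₀ ≠ 0 := sub_ne_zero.2 hz.2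
  simp only [hM₁ z hz, hM₂ z hz, principalPart, Finsupp.sum, Pi.add_apply, Finset.sum_apply,
    add_mul, mul_add, Finset.mul_sum, Finset.sum_mul, smul_mul_assoc, mul_smul_comm, smul_add,
    Finset.smul_sum, smul_smul, Finset.sum_add_distrib, zpow_add₀ hw]
  rw [Finset.sum_comm (s := B.support)]
  abel

end FinitelyMeromorphicAt

section CircleIntegral

variable {E F G : Type*} [NormedAddCommGroup E] [NormedSpace ℂ E] [CompleteSpace E]
  [NormedAddCommGroup F] [NormedSpace ℂ F]
  [NormedAddCommGroup G] [NormedSpace ℂ G] [CompleteSpace G] {c : ℂ} {R : ℝ}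

theorem continuousOn_sub_zpow_sphere (c : ℂ) (m : ℤ) (hR : R ≠ 0) :
    ContinuousOn (fun z => (z - c) ^ m) (sphere c R) :=
  (continuousOn_id.sub continuousOn_const).zpow₀ m fun _ hz =>
    Or.inl (sub_ne_zero.2 (ne_of_mem_sphere hz hR))

theorem ContinuousLinearMap.circleIntegral_comp_comm (L : E →L[ℂ] G) {f : ℂ → E}
    (hf : CircleIntegrable f c R) : ∮ z in C(c, R), L (f z) = L (∮ z in C(c, R), f z) := by
  simp only [circleIntegral, ← L.map_smul]
  exact L.intervalIntegral_comp_comm hf.out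

theorem circleIntegral_zpow_smul_principalPart {m : ℤ} (hm : m < 0) (hR : 0 < R)
    (A : ℕ →₀ E) : ∮ z in C(c, R), (z - c) ^ m • principalPart c A z = 0 := by
  have hsum : ∀ z, (z - c) ^ m • principalPart c A z =
      ∑ k ∈ A.support, (z - c) ^ (m + -(k + 1 : ℤ)) • A k := fun z => by
    rw [principalPart, Finsupp.sum, Finset.smul_sum]
    exact Finset.sum_congr rfl fun k _ => by rw [smul_smul, zpow_add' (Or.inr (Or.inl (by omega)))]
  simp only [hsum]
  rw [circleIntegral.integral_fun_sum fun k _ => ?_]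
  · refine Finset.sum_eq_zero fun k _ => ?_
    rw [circleIntegral.integral_smul_const, circleIntegral.integral_sub_zpow_of_ne (by omega),
      zero_smul]
  · exact ((continuousOn_sub_zpow_sphere c _ hR.ne').smul continuousOn_const).circleIntegrable hR.le

theorem circleIntegral_bilin_principalPart (B : E →L[ℂ] F →L[ℂ] G) {f : ℂ → E}
    (hf : ContinuousOn f (sphere c R)) (hR : 0 < R) (A : ℕ →₀ F) :
    ∮ z in C(c, R), B (f z) (principalPart c A z) =
      A.sum fun k a => B (∮ z in C(c, R), (z - c) ^ (-(k + 1 : ℤ)) • f z) a := by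
  have hcont : ∀ k : ℕ, ContinuousOn (fun z => (z - c) ^ (-(k + 1 : ℤ)) • f z) (sphere c R) :=
    fun k => (continuousOn_sub_zpow_sphere c _ hR.ne').smul hf
  have hsum : ∀ z, B (f z) (principalPart c A z) =
      ∑ k ∈ A.support, B.flip (A k) ((z - c) ^ (-(k + 1 : ℤ)) • f z) := fun z => by
    simp [principalPart, Finsupp.sum, map_sum]
  simp only [hsum]
  rw [circleIntegral.integral_fun_sum fun k _ => ?_]
  · exact Finset.sum_congr rfl fun k _ =>
      (B.flip (A k)).circleIntegral_comp_comm ((hcont k).circleIntegrable hR.le)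
  · exact ((B.flip (A k)).continuous.comp_continuousOn (hcont k)).circleIntegrable hR.le

end CircleIntegral

theorem circleIntegral_mul_of_eq_add_principalPart {𝒜 : Type*} [NormedRing 𝒜] [NormedAlgebra ℂ 𝒜]
    [CompleteSpace 𝒜] {M₁ M₂ g₁ g₂ : ℂ → 𝒜} {A B : ℕ →₀ 𝒜} {z₀ : ℂ} {r R : ℝ}
    (hg₁ : AnalyticOnNhd ℂ g₁ (ball z₀ r)) (hg₂ : AnalyticOnNhd ℂ g₂ (ball z₀ r))
    (hM₁ : ∀ z ∈ ball z₀ r \ {z₀}, M₁ z = g₁ z + principalPart z₀ A z)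
    (hM₂ : ∀ z ∈ ball z₀ r \ {z₀}, M₂ z = g₂ z + principalPart z₀ B z) (hR : 0 < R) (hRr : R < r) :
    ∮ z in C(z₀, R), M₁ z * M₂ z =
      (A.sum fun k a => a * ∮ z in C(z₀, R), (z - z₀) ^ (-(k + 1 : ℤ)) • g₂ z) +
        B.sum fun l b => (∮ z in C(z₀, R), (z - z₀) ^ (-(l + 1 : ℤ)) • g₁ z) * b := by
  have hsphere : sphere z₀ R ⊆ ball z₀ r \ {z₀} := fun z hz =>
    ⟨sphere_subset_ball hRr hz, ne_of_mem_sphere hz hR.ne'⟩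
  have hg₁c : ContinuousOn g₁ (sphere z₀ R) :=
    hg₁.continuousOn.mono (hsphere.trans Set.sdiff_subset)
  have hg₂c : ContinuousOn g₂ (sphere z₀ R) :=
    hg₂.continuousOn.mono (hsphere.trans Set.sdiff_subset)
  have hPc : ∀ C : ℕ →₀ 𝒜, ContinuousOn (principalPart z₀ C) (sphere z₀ R) := fun C =>
    (continuousOn_principalPart C).mono fun z hz => ne_of_mem_sphere hz hR.ne'
  have hcauchy : ∮ z in C(z₀, R), g₁ z * g₂ z = 0 :=
    ((hg₁.mul hg₂).differentiableOn.diffContOnCl_ball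
      (closedBall_subset_ball hRr)).circleIntegral_eq_zero hR.le
  have hright : ∮ z in C(z₀, R), principalPart z₀ A z * g₂ z =
      A.sum fun k a => a * ∮ z in C(z₀, R), (z - z₀) ^ (-(k + 1 : ℤ)) • g₂ z := by
    simpa using circleIntegral_bilin_principalPart (ContinuousLinearMap.mul ℂ 𝒜).flip hg₂c hR A
  have hleft : ∮ z in C(z₀, R), (g₁ z + principalPart z₀ A z) * principalPart z₀ B z =
      B.sum fun l b => (∮ z in C(z₀, R), (z - z₀) ^ (-(l + 1 : ℤ)) • g₁ z) * b := by
    have := circleIntegral_bilin_principalPart (ContinuousLinearMap.mul ℂ 𝒜) (hg₁c.add (hPc A)) hR B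
    simp only [ContinuousLinearMap.mul_apply', Pi.add_apply] at this
    rw [this]
    refine Finsupp.sum_congr fun l _ => ?_
    have hzpow := continuousOn_sub_zpow_sphere z₀ (-(l + 1 : ℤ)) hR.ne'
    simp only [smul_add]
    rw [circleIntegral.integral_add ?_ ?_, circleIntegral_zpow_smul_principalPart (by omega) hR,
      add_zero]
    exacts [(hzpow.smul hg₁c).circleIntegrable hR.le, (hzpow.smul (hPc A)).circleIntegrable hR.le]
  rw [circleIntegral.integral_congr hR.le fun z hz => by
      rw [hM₁ z (hsphere hz), hM₂ z (hsphere hz), mul_add, add_mul],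
    circleIntegral.integral_add ?_ ?_, circleIntegral.integral_add ?_ ?_, hcauchy, hright, hleft,
    zero_add]
  exacts [(hg₁c.mul hg₂c).circleIntegrable hR.le, ((hPc A).mul hg₂c).circleIntegrable hR.le,
    ((hg₁c.mul hg₂c).add ((hPc A).mul hg₂c)).circleIntegrable hR.le,
    ((hg₁c.add (hPc A)).mul (hPc B)).circleIntegrable hR.le]

theorem finitelyMeromorphic_mul_general (M₁ M₂ : ℂ → H →L[ℂ] H) (z₀ : ℂ) (ε₀ : ℝ)
    (hm₁ : FinitelyMeromorphicAt M₁ z₀ ε₀)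
    (hm₂ : FinitelyMeromorphicAt M₂ z₀ ε₀) :
    FinitelyMeromorphicAt (fun z => M₁ z ∘L M₂ z) z₀ ε₀ ∧
    FinitelyMeromorphicAt (fun z => M₂ z ∘L M₁ z) z₀ ε₀ ∧
    ∀ ε, 0 < ε → ε < ε₀ →
      FinRank (∮ ζ in C(z₀, ε), (M₁ ζ ∘L M₂ ζ)) ∧
      FinRank (∮ ζ in C(z₀, ε), (M₂ ζ ∘L M₁ ζ)) ∧
      LinearMap.trace ℂ H
          (ContinuousLinearMap.toLinearMap (∮ ζ in C(z₀, ε), (M₁ ζ ∘L M₂ ζ)))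
        = LinearMap.trace ℂ H
          (ContinuousLinearMap.toLinearMap (∮ ζ in C(z₀, ε), (M₂ ζ ∘L M₁ ζ))) := by
  refine ⟨hm₁.mul hm₂, hm₂.mul hm₁, fun ε hε hεε => ?_⟩
  obtain ⟨A, g₁, hA, hg₁, hM₁⟩ := FinitelyMeromorphicAt.iff_exists_principalPart.1 hm₁
  obtain ⟨B, g₂, hB, hg₂, hM₂⟩ := FinitelyMeromorphicAt.iff_exists_principalPart.1 hm₂
  have h₁₂ : ∮ ζ in C(z₀, ε), M₁ ζ ∘L M₂ ζ = _ :=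
    circleIntegral_mul_of_eq_add_principalPart hg₁ hg₂ hM₁ hM₂ hε hεε
  have h₂₁ : ∮ ζ in C(z₀, ε), M₂ ζ ∘L M₁ ζ = _ :=
    circleIntegral_mul_of_eq_add_principalPart hg₂ hg₁ hM₂ hM₁ hε hεε
  rw [h₁₂, h₂₁]
  refine ⟨.add (.finsuppSum _ fun k => (hA k).mul_right _)
      (.finsuppSum _ fun l => .mul_left _ (hB l)),
    .add (.finsuppSum _ fun l => (hB l).mul_right _) (.finsuppSum _ fun k => .mul_left _ (hA k)),
    ?_⟩
  simp only [Finsupp.sum, ContinuousLinearMap.toLinearMap_add,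
    ContinuousLinearMap.toLinearMap_sum, map_add, map_sum]
  rw [add_comm]
  congr 1 <;> exact Finset.sum_congr rfl fun _ _ => ContinuousLinearMap.trace_mul_comm _ _

/-- If `M₁, M₂` are `B(H)`-valued functions, analytic on the punctured
disk `D(z₀;ε₀) \ {z₀}` and finitely meromorphic at `z₀`, then `M₁M₂` and `M₂M₁` are
finitely meromorphic at `z₀`, and for `0 < ε < ε₀` the contour integrals
`∮_{C(z₀;ε)} M₁(ζ)M₂(ζ) dζ` and `∮_{C(z₀;ε)} M₂(ζ)M₁(ζ) dζ` are finite-rank operators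
with equal traces. -/
theorem finitelyMeromorphic_mul (M₁ M₂ : ℂ → H →L[ℂ] H) (z₀ : ℂ) (ε₀ : ℝ) (hε₀ : 0 < ε₀)
    (hM₁ : AnalyticOnNhd ℂ M₁ (Metric.ball z₀ ε₀ \ {z₀}))
    (hM₂ : AnalyticOnNhd ℂ M₂ (Metric.ball z₀ ε₀ \ {z₀}))
    (hm₁ : FinitelyMeromorphicAt M₁ z₀ ε₀)
    (hm₂ : FinitelyMeromorphicAt M₂ z₀ ε₀) :
    FinitelyMeromorphicAt (fun z => M₁ z ∘L M₂ z) z₀ ε₀ ∧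
    FinitelyMeromorphicAt (fun z => M₂ z ∘L M₁ z) z₀ ε₀ ∧
    ∀ ε, 0 < ε → ε < ε₀ →
      FinRank (∮ ζ in C(z₀, ε), (M₁ ζ ∘L M₂ ζ)) ∧
      FinRank (∮ ζ in C(z₀, ε), (M₂ ζ ∘L M₁ ζ)) ∧
      LinearMap.trace ℂ H
          (ContinuousLinearMap.toLinearMap (∮ ζ in C(z₀, ε), (M₁ ζ ∘L M₂ ζ)))
        = LinearMap.trace ℂ H
          (ContinuousLinearMap.toLinearMap (∮ ζ in C(z₀, ε), (M₂ ζ ∘L M₁ ζ))) :=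
  finitelyMeromorphic_mul_general M₁ M₂ z₀ ε₀ hm₁ hm₂
end

section
/- (Resolvent identity for the Birman–Schwinger operator) Assume H₀ is a densely defined closed operator in H with z₁, z₂ in its resolvent set, V₁, V₂ are densely defined closed operators from H to K with dom(V₁) ⊇ dom(H₀), dom(V₂) ⊇ dom(H₀*), and K(z) = -closure(V₁(H₀ - z)⁻¹V₂*) ∈ B(K) for z ∈ ρ(H₀). Then K(z₁) = K(z₂) + (z₂ - z₁) V₁(H₀ - z₁)⁻¹ closure((H₀ - z₂)⁻¹V₂*). -/
/-!
Composing the first resolvent identity `R(z₂) = R(z₁) + (z₂ - z₁) R(z₁) R(z₂)` with `V₁` gives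
`V₁R(z₁) = V₁R(z₂) + (z₁ - z₂) V₁R(z₁) R(z₂)`. Applied to `V₂* g` this is the claimed identity on
the dense subspace `dom V₂*`, and both sides are bounded operators on `K`.
-/

namespace LinearPMap

variable {𝕜 E F : Type*} [NormedField 𝕜] [NormedAddCommGroup E] [NormedSpace 𝕜 E]
  [NormedAddCommGroup F] [NormedSpace 𝕜 F]

def IsResolvent (T : E →ₗ.[𝕜] E) (z : 𝕜) (R : E →L[𝕜] E) : Prop :=
  (∀ y : E, ∃ hy : R y ∈ T.domain, T ⟨R y, hy⟩ - z • R y = y) ∧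
    ∀ x : T.domain, R (T x - z • (x : E)) = x

variable {T : E →ₗ.[𝕜] E} {z₁ z₂ : 𝕜} {R₁ R₂ : E →L[𝕜] E}

theorem IsResolvent.mem_domain {z : 𝕜} {R : E →L[𝕜] E} (hR : T.IsResolvent z R) (y : E) :
    R y ∈ T.domain :=
  (hR.1 y).1

theorem IsResolvent.apply_eq_add_smul (hR₁ : T.IsResolvent z₁ R₁) (hR₂ : T.IsResolvent z₂ R₂)
    (f : E) : R₂ f = R₁ f + (z₂ - z₁) • R₁ (R₂ f) := by
  obtain ⟨hf, hTf⟩ := hR₂.1 f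
  have hshift : T ⟨R₂ f, hf⟩ - z₁ • R₂ f = f + (z₂ - z₁) • R₂ f := by
    linear_combination (norm := module) hTf
  calc R₂ f = R₁ (T ⟨R₂ f, hf⟩ - z₁ • R₂ f) := (hR₁.2 ⟨R₂ f, hf⟩).symm
    _ = R₁ f + (z₂ - z₁) • R₁ (R₂ f) := by rw [hshift, R₁.map_add, R₁.map_smul]

theorem IsResolvent.comp_eq_add_smul_comp (hR₁ : T.IsResolvent z₁ R₁)
    (hR₂ : T.IsResolvent z₂ R₂) {S : E →ₗ.[𝕜] F} (hdom : T.domain ≤ S.domain)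
    {A₁ A₂ : E →L[𝕜] F} (hA₁ : ∀ (y : E) (hy : R₁ y ∈ S.domain), A₁ y = S ⟨R₁ y, hy⟩)
    (hA₂ : ∀ (y : E) (hy : R₂ y ∈ S.domain), A₂ y = S ⟨R₂ y, hy⟩) :
    A₁ = A₂ + (z₁ - z₂) • A₁ ∘L R₂ := by
  ext f
  have mem₁ (y : E) : R₁ y ∈ S.domain := hdom (hR₁.mem_domain y)
  have hsplit : (⟨R₂ f, hdom (hR₂.mem_domain f)⟩ : S.domain)
      = ⟨R₁ f, mem₁ f⟩ + (z₂ - z₁) • ⟨R₁ (R₂ f), mem₁ (R₂ f)⟩ :=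
    Subtype.ext (hR₁.apply_eq_add_smul hR₂ f)
  simp only [_root_.add_apply, _root_.smul_apply, ContinuousLinearMap.comp_apply]
  rw [hA₁ f (mem₁ f), hA₂ f (hdom (hR₂.mem_domain f)), hA₁ _ (mem₁ (R₂ f)), hsplit,
    S.map_add, S.map_smul]
  module

end LinearPMap

theorem birmanSchwinger_resolvent_identity_general
    {H K : Type*} [NormedAddCommGroup H] [InnerProductSpace ℂ H] [CompleteSpace H]
    [NormedAddCommGroup K] [InnerProductSpace ℂ K]
    (H₀ : H →ₗ.[ℂ] H)
    (V₁ : H →ₗ.[ℂ] K)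
    (V₂ : H →ₗ.[ℂ] K)
    (hdomV₁ : H₀.domain ≤ V₁.domain)
    (hV₂adjDense : Dense ((LinearPMap.adjoint V₂).domain : Set K))
    (ρ : Set ℂ) (R₀ : ℂ → H →L[ℂ] H)
    (hR₀ : ∀ z ∈ ρ,
      (∀ y : H, ∃ hy : R₀ z y ∈ H₀.domain, H₀ ⟨R₀ z y, hy⟩ - z • R₀ z y = y) ∧
      (∀ x : H₀.domain, R₀ z (H₀ x - z • (x : H)) = (x : H)))
    (V₁R₀ : ℂ → H →L[ℂ] K)
    (hV₁R₀ : ∀ z ∈ ρ, ∀ (y : H) (hy : R₀ z y ∈ V₁.domain),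
      V₁R₀ z y = V₁ ⟨R₀ z y, hy⟩)
    (RV₂ : ℂ → K →L[ℂ] H)
    (hRV₂ : ∀ z ∈ ρ, ∀ g : (LinearPMap.adjoint V₂).domain,
      RV₂ z (g : K) = R₀ z (LinearPMap.adjoint V₂ g))
    (BS : ℂ → K →L[ℂ] K)
    (hBS : ∀ z ∈ ρ, ∀ g : (LinearPMap.adjoint V₂).domain,
      BS z (g : K) = -(V₁R₀ z (LinearPMap.adjoint V₂ g)))
    (z₁ : ℂ) (hz₁ : z₁ ∈ ρ) (z₂ : ℂ) (hz₂ : z₂ ∈ ρ) :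
    BS z₁ = BS z₂ + (z₂ - z₁) • (V₁R₀ z₁ ∘L RV₂ z₂) := by
  have hV₁R₀_identity : V₁R₀ z₁ = V₁R₀ z₂ + (z₁ - z₂) • V₁R₀ z₁ ∘L R₀ z₂ :=
    LinearPMap.IsResolvent.comp_eq_add_smul_comp (hR₀ z₁ hz₁) (hR₀ z₂ hz₂) hdomV₁
      (hV₁R₀ z₁ hz₁) (hV₁R₀ z₂ hz₂)
  refine ContinuousLinearMap.ext_on (by rwa [Submodule.span_eq]) ?_
  intro g hg
  have hV₁R₀_at := DFunLike.congr_fun hV₁R₀_identity (LinearPMap.adjoint V₂ ⟨g, hg⟩)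
  simp only [add_apply, smul_apply, ContinuousLinearMap.comp_apply] at hV₁R₀_at ⊢
  rw [hBS z₁ hz₁ ⟨g, hg⟩, hBS z₂ hz₂ ⟨g, hg⟩, hRV₂ z₂ hz₂ ⟨g, hg⟩, hV₁R₀_at]
  module

/-- (Resolvent identity for the Birman–Schwinger operator.)
Under the Kato–Konno–Kuroda hypotheses — `H₀` densely defined and closed in `H` with
resolvent set `ρ` and resolvent `R₀ z = (H₀ - z)⁻¹`; `V₁, V₂` densely defined closed
operators from `H` to `K` with `dom V₁ ⊇ dom H₀`, `dom V₂ ⊇ dom H₀*`; `V₁R₀ z` the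
bounded operator `V₁ R₀(z)`; `RV₂ z` the bounded closure of `R₀(z) V₂*`; and
`BS z = -closure(V₁ R₀(z) V₂*)` — one has, for `z₁, z₂ ∈ ρ`,
`K(z₁) = K(z₂) + (z₂ - z₁) V₁R₀(z₁) ∘ closure(R₀(z₂)V₂*)`. -/
theorem birmanSchwinger_resolvent_identity
    {H K : Type*} [NormedAddCommGroup H] [InnerProductSpace ℂ H] [CompleteSpace H]
    [NormedAddCommGroup K] [InnerProductSpace ℂ K] [CompleteSpace K]
    (H₀ : H →ₗ.[ℂ] H) (hH₀dense : Dense (H₀.domain : Set H)) (hH₀closed : H₀.IsClosed)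
    (V₁ : H →ₗ.[ℂ] K) (hV₁dense : Dense (V₁.domain : Set H)) (hV₁closed : V₁.IsClosed)
    (V₂ : H →ₗ.[ℂ] K) (hV₂dense : Dense (V₂.domain : Set H)) (hV₂closed : V₂.IsClosed)
    (hdomV₁ : H₀.domain ≤ V₁.domain)
    (hdomV₂ : (LinearPMap.adjoint H₀).domain ≤ V₂.domain)
    (hV₂adjDense : Dense ((LinearPMap.adjoint V₂).domain : Set K))
    (ρ : Set ℂ) (R₀ : ℂ → H →L[ℂ] H)
    (hR₀ : ∀ z ∈ ρ,
      (∀ y : H, ∃ hy : R₀ z y ∈ H₀.domain, H₀ ⟨R₀ z y, hy⟩ - z • R₀ z y = y) ∧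
      (∀ x : H₀.domain, R₀ z (H₀ x - z • (x : H)) = (x : H)))
    (V₁R₀ : ℂ → H →L[ℂ] K)
    (hV₁R₀ : ∀ z ∈ ρ, ∀ (y : H) (hy : R₀ z y ∈ V₁.domain),
      V₁R₀ z y = V₁ ⟨R₀ z y, hy⟩)
    (RV₂ : ℂ → K →L[ℂ] H)
    (hRV₂ : ∀ z ∈ ρ, ∀ g : (LinearPMap.adjoint V₂).domain,
      RV₂ z (g : K) = R₀ z (LinearPMap.adjoint V₂ g))
    (BS : ℂ → K →L[ℂ] K)
    (hBS : ∀ z ∈ ρ, ∀ g : (LinearPMap.adjoint V₂).domain,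
      BS z (g : K) = -(V₁R₀ z (LinearPMap.adjoint V₂ g)))
    (z₁ : ℂ) (hz₁ : z₁ ∈ ρ) (z₂ : ℂ) (hz₂ : z₂ ∈ ρ) :
    BS z₁ = BS z₂ + (z₂ - z₁) • (V₁R₀ z₁ ∘L RV₂ z₂) :=
  birmanSchwinger_resolvent_identity_general H₀ V₁ V₂ hdomV₁ hV₂adjDense ρ R₀ hR₀ V₁R₀ hV₁R₀ RV₂
    hRV₂ BS hBS z₁ hz₁ z₂ hz₂
end

section
/- (Derivative of the Birman–Schwinger operator) Under the Kato–Konno–Kuroda hypotheses, the B(K)-valued function K(·) is analytic on ρ(H₀) with derivative K'(z) = -V₁R₀(z) · closure(R₀(z)V₂*) for all z ∈ ρ(H₀). -/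
/-!
The first resolvent identity `R₀(w) = R₀(z) + (w - z) R₀(w) R₀(z)` passes through `V₁` and,
tested on the dense domain of `V₂*`, gives `K(w) - K(z) = -(w - z) V₁R₀(w) closure(R₀(z)V₂*)`.
Rewriting the identity for `V₁R₀` as `V₁R₀(w) (1 - (w - z) R₀(z)) = V₁R₀(z)` and inverting the
factor near `w = z` shows that `V₁R₀` is norm-continuous, so the difference quotients of `K`
converge. Complex differentiability on the open set `ρ(H₀)` then gives analyticity.
-/

open Topology Filter

section

variable {𝕜 E F : Type*} [NontriviallyNormedField 𝕜]
  [NormedAddCommGroup E] [NormedSpace 𝕜 E] [NormedAddCommGroup F] [NormedSpace 𝕜 F]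

namespace LinearPMap

def IsResolventAt (T : E →ₗ.[𝕜] E) (z : 𝕜) (R : E →L[𝕜] E) : Prop :=
  (∀ y : E, ∃ hy : R y ∈ T.domain, T ⟨R y, hy⟩ - z • R y = y) ∧
    ∀ x : T.domain, R (T x - z • (x : E)) = x

namespace IsResolventAt

variable {T : E →ₗ.[𝕜] E} {z w : 𝕜} {Rz Rw : E →L[𝕜] E}

theorem mem_domain (h : T.IsResolventAt z Rz) (y : E) : Rz y ∈ T.domain :=
  (h.1 y).1

theorem resolvent_identity (hz : T.IsResolventAt z Rz) (hw : T.IsResolventAt w Rw) (y : E) :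
    Rw y = Rz y + (w - z) • Rw (Rz y) := by
  obtain ⟨hy, hTy⟩ := hz.1 y
  have hsplit : y = (T ⟨Rz y, hy⟩ - w • Rz y) + (w - z) • Rz y := by
    conv_lhs => rw [← hTy]
    module
  calc Rw y = Rw ((T ⟨Rz y, hy⟩ - w • Rz y) + (w - z) • Rz y) := congrArg Rw hsplit
    _ = Rz y + (w - z) • Rw (Rz y) := by
      rw [Rw.map_add, Rw.map_smul, hw.2 ⟨Rz y, hy⟩]

theorem comp_resolvent_identity {V : E →ₗ.[𝕜] F} (hTV : T.domain ≤ V.domain)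
    (hz : T.IsResolventAt z Rz) (hw : T.IsResolventAt w Rw) {Az Aw : E →L[𝕜] F}
    (hAz : ∀ (y : E) (hy : Rz y ∈ V.domain), Az y = V ⟨Rz y, hy⟩)
    (hAw : ∀ (y : E) (hy : Rw y ∈ V.domain), Aw y = V ⟨Rw y, hy⟩) :
    Aw = Az + (w - z) • (Aw ∘L Rz) := by
  ext y
  change Aw y = Az y + (w - z) • Aw (Rz y)
  have hmem {u : 𝕜} {R : E →L[𝕜] E} (h : T.IsResolventAt u R) (y : E) : R y ∈ V.domain :=
    hTV (h.mem_domain y)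
  rw [hAw y (hmem hw y), hAz y (hmem hz y), hAw (Rz y) (hmem hw (Rz y)), ← V.map_smul,
    ← V.map_add]
  congr 1
  exact Subtype.ext (hz.resolvent_identity hw y)

end IsResolventAt

end LinearPMap

theorem birmanSchwinger_sub_eq_smul {z w : 𝕜} {S : F →ₗ.[𝕜] E}
    (hS : Dense (S.domain : Set F)) {Az Aw : E →L[𝕜] F} {Rz : E →L[𝕜] E} {RSz : F →L[𝕜] E}
    {Bz Bw : F →L[𝕜] F} (hA : Aw = Az + (w - z) • (Aw ∘L Rz))
    (hRSz : ∀ g : S.domain, RSz g = Rz (S g))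
    (hBz : ∀ g : S.domain, Bz g = -Az (S g)) (hBw : ∀ g : S.domain, Bw g = -Aw (S g)) :
    Bw - Bz = (w - z) • -(Aw ∘L RSz) := by
  refine ContinuousLinearMap.ext_on (by rwa [Submodule.span_eq]) fun k hk => ?_
  set g : S.domain := ⟨k, hk⟩
  change (Bw - Bz) (g : F) = ((w - z) • -(Aw ∘L RSz)) (g : F)
  have hAg := DFunLike.congr_fun hA (S g)
  simp only [add_apply, smul_apply, ContinuousLinearMap.comp_apply] at hAg
  simp only [sub_apply, smul_apply, neg_apply, ContinuousLinearMap.comp_apply, hBw, hBz, hRSz,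
    hAg]
  module

theorem continuousAt_of_eventually_eq_add_smul_comp [CompleteSpace E] {A : 𝕜 → E →L[𝕜] F}
    {T : E →L[𝕜] E} {z : 𝕜} (hA : ∀ᶠ w in 𝓝 z, A w = A z + (w - z) • (A w ∘L T)) :
    ContinuousAt A z := by
  set U : 𝕜 → E →L[𝕜] E := fun w => 1 - (w - z) • T
  have hU : Tendsto U (𝓝 z) (𝓝 1) := by
    have : Continuous U := by fun_prop
    simpa [U] using this.tendsto z
  have hUinv : Tendsto (fun w => Ring.inverse (U w)) (𝓝 z) (𝓝 1) := by
    have := (NormedRing.inverse_continuousAt (1 : (E →L[𝕜] E)ˣ)).tendsto.comp hU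
    rwa [Units.val_one, Ring.inverse_one] at this
  have hAinv : ∀ᶠ w in 𝓝 z, A w = A z ∘L Ring.inverse (U w) := by
    filter_upwards [hA, hU.eventually (Units.isOpen.mem_nhds isUnit_one)] with w hw hunit
    have hAU : A w ∘L U w = A z := by
      rw [ContinuousLinearMap.comp_sub, ContinuousLinearMap.comp_smul, ContinuousLinearMap.one_def,
        ContinuousLinearMap.comp_id, sub_eq_iff_eq_add, ← hw]
    rw [← hAU, ContinuousLinearMap.comp_assoc, ← ContinuousLinearMap.mul_def,
      Ring.mul_inverse_cancel _ hunit, ContinuousLinearMap.one_def, ContinuousLinearMap.comp_id]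
  have hlim : Tendsto (fun w => A z ∘L Ring.inverse (U w)) (𝓝 z) (𝓝 (A z)) := by
    have := ((ContinuousLinearMap.compL 𝕜 E E F (A z)).continuous.tendsto 1).comp hUinv
    rwa [ContinuousLinearMap.compL_apply, ContinuousLinearMap.one_def,
      ContinuousLinearMap.comp_id] at this
  exact hlim.congr' (hAinv.mono fun _ h => h.symm)

theorem hasDerivAt_of_eventually_sub_eq_smul {f g : 𝕜 → F} {z : 𝕜}
    (hfg : ∀ᶠ w in 𝓝 z, f w - f z = (w - z) • g w) (hg : ContinuousAt g z) :
    HasDerivAt f (g z) z := by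
  rw [hasDerivAt_iff_tendsto_slope]
  refine (hg.tendsto.mono_left nhdsWithin_le_nhds).congr' ?_
  filter_upwards [nhdsWithin_le_nhds hfg, self_mem_nhdsWithin] with w hw hne
  rw [slope_def_module, hw, inv_smul_smul₀ (sub_ne_zero.2 hne)]

end

theorem birmanSchwinger_hasDerivAt_general
    {H K : Type*} [NormedAddCommGroup H] [InnerProductSpace ℂ H] [CompleteSpace H]
    [NormedAddCommGroup K] [InnerProductSpace ℂ K] [CompleteSpace K]
    (H₀ : H →ₗ.[ℂ] H)
    (V₁ : H →ₗ.[ℂ] K)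
    (V₂ : H →ₗ.[ℂ] K)
    (hdomV₁ : H₀.domain ≤ V₁.domain)
    (hV₂adjDense : Dense ((LinearPMap.adjoint V₂).domain : Set K))
    (ρ : Set ℂ) (R₀ : ℂ → H →L[ℂ] H)
    (hR₀ : ∀ z ∈ ρ,
      (∀ y : H, ∃ hy : R₀ z y ∈ H₀.domain, H₀ ⟨R₀ z y, hy⟩ - z • R₀ z y = y) ∧
      (∀ x : H₀.domain, R₀ z (H₀ x - z • (x : H)) = (x : H)))
    (V₁R₀ : ℂ → H →L[ℂ] K)
    (hV₁R₀ : ∀ z ∈ ρ, ∀ (y : H) (hy : R₀ z y ∈ V₁.domain),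
      V₁R₀ z y = V₁ ⟨R₀ z y, hy⟩)
    (RV₂ : ℂ → K →L[ℂ] H)
    (hRV₂ : ∀ z ∈ ρ, ∀ g : (LinearPMap.adjoint V₂).domain,
      RV₂ z (g : K) = R₀ z (LinearPMap.adjoint V₂ g))
    (BS : ℂ → K →L[ℂ] K)
    (hBS : ∀ z ∈ ρ, ∀ g : (LinearPMap.adjoint V₂).domain,
      BS z (g : K) = -(V₁R₀ z (LinearPMap.adjoint V₂ g)))
    (hρ : IsOpen ρ) :
    AnalyticOnNhd ℂ BS ρ ∧
    ∀ z ∈ ρ, HasDerivAt BS (-(V₁R₀ z ∘L RV₂ z)) z := by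
  have hres : ∀ z ∈ ρ, H₀.IsResolventAt z (R₀ z) := hR₀
  have hderiv : ∀ z ∈ ρ, HasDerivAt BS (-(V₁R₀ z ∘L RV₂ z)) z := by
    intro z hz
    have hV₁R₀_sub : ∀ᶠ w in 𝓝 z, V₁R₀ w = V₁R₀ z + (w - z) • (V₁R₀ w ∘L R₀ z) := by
      filter_upwards [hρ.mem_nhds hz] with w hw
      exact (hres z hz).comp_resolvent_identity hdomV₁ (hres w hw) (hV₁R₀ z hz) (hV₁R₀ w hw)
    refine hasDerivAt_of_eventually_sub_eq_smul (g := fun w => -(V₁R₀ w ∘L RV₂ z)) ?_ ?_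
    · filter_upwards [hρ.mem_nhds hz, hV₁R₀_sub] with w hw hV₁R₀_w
      exact birmanSchwinger_sub_eq_smul hV₂adjDense hV₁R₀_w (hRV₂ z hz) (hBS z hz) (hBS w hw)
    · exact ((continuousAt_of_eventually_eq_add_smul_comp hV₁R₀_sub).clm_comp
        continuousAt_const).neg
  refine ⟨DifferentiableOn.analyticOnNhd (fun z hz => ?_) hρ, hderiv⟩
  exact (hderiv z hz).differentiableAt.differentiableWithinAt

/-- (Derivative of the Birman–Schwinger operator.)
Under the Kato–Konno–Kuroda hypotheses, the `B(K)`-valued Birman–Schwinger function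
`K(·) = BS` is analytic on the (open) resolvent set `ρ(H₀)` with derivative
`K'(z) = -V₁R₀(z) ∘ closure(R₀(z)V₂*)` for all `z ∈ ρ(H₀)`. -/
theorem birmanSchwinger_hasDerivAt
    {H K : Type*} [NormedAddCommGroup H] [InnerProductSpace ℂ H] [CompleteSpace H]
    [NormedAddCommGroup K] [InnerProductSpace ℂ K] [CompleteSpace K]
    (H₀ : H →ₗ.[ℂ] H) (hH₀dense : Dense (H₀.domain : Set H)) (hH₀closed : H₀.IsClosed)
    (V₁ : H →ₗ.[ℂ] K) (hV₁dense : Dense (V₁.domain : Set H)) (hV₁closed : V₁.IsClosed)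
    (V₂ : H →ₗ.[ℂ] K) (hV₂dense : Dense (V₂.domain : Set H)) (hV₂closed : V₂.IsClosed)
    (hdomV₁ : H₀.domain ≤ V₁.domain)
    (hdomV₂ : (LinearPMap.adjoint H₀).domain ≤ V₂.domain)
    (hV₂adjDense : Dense ((LinearPMap.adjoint V₂).domain : Set K))
    (ρ : Set ℂ) (R₀ : ℂ → H →L[ℂ] H)
    (hR₀ : ∀ z ∈ ρ,
      (∀ y : H, ∃ hy : R₀ z y ∈ H₀.domain, H₀ ⟨R₀ z y, hy⟩ - z • R₀ z y = y) ∧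
      (∀ x : H₀.domain, R₀ z (H₀ x - z • (x : H)) = (x : H)))
    (V₁R₀ : ℂ → H →L[ℂ] K)
    (hV₁R₀ : ∀ z ∈ ρ, ∀ (y : H) (hy : R₀ z y ∈ V₁.domain),
      V₁R₀ z y = V₁ ⟨R₀ z y, hy⟩)
    (RV₂ : ℂ → K →L[ℂ] H)
    (hRV₂ : ∀ z ∈ ρ, ∀ g : (LinearPMap.adjoint V₂).domain,
      RV₂ z (g : K) = R₀ z (LinearPMap.adjoint V₂ g))
    (BS : ℂ → K →L[ℂ] K)
    (hBS : ∀ z ∈ ρ, ∀ g : (LinearPMap.adjoint V₂).domain,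
      BS z (g : K) = -(V₁R₀ z (LinearPMap.adjoint V₂ g)))
    (hρ : IsOpen ρ) :
    AnalyticOnNhd ℂ BS ρ ∧
    ∀ z ∈ ρ, HasDerivAt BS (-(V₁R₀ z ∘L RV₂ z)) z :=
  birmanSchwinger_hasDerivAt_general H₀ V₁ V₂ hdomV₁ hV₂adjDense ρ R₀ hR₀ V₁R₀ hV₁R₀ RV₂ hRV₂ BS hBS
    hρ
end

section
/- (Abstract Birman–Schwinger principle, eigenvalue direction) Assume the Kato–Konno–Kuroda hypotheses and let z₀ ∈ ρ(H₀). If K(z₀)g = g for some nonzero g ∈ K, then f = -closure(R₀(z₀)V₂*) g is a nonzero element of dom(H) and Hf = z₀ f; in particular 1 ∈ σ_p(K(z₀)) implies z₀ ∈ σ_p(H). -/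
/-!
Pick `ζ ∈ ρ` where `1 - K(ζ)` is invertible, so that `R(ζ)` is an honest inverse of `H - ζ`.
The first resolvent identity for `R₀`, transported through `V₁` and `V₂*` and extended by
density, gives `K(ζ) - K(z₀) = (z₀ - ζ) V₁R₀(ζ) R₀(z₀)V₂*` and
`R₀(ζ)V₂* - R₀(z₀)V₂* = (ζ - z₀) R₀(ζ) R₀(z₀)V₂*`. From `K(z₀) g = g` these yield
`(z₀ - ζ) R(ζ) f = f`, i.e. `f` is an eigenvector of the resolvent `R(ζ)` with eigenvalue
`(z₀ - ζ)⁻¹`, hence `f ∈ dom H` and `H f = z₀ f`. If `f = 0`, then `(1 - K(ζ)) g = 0`, so `g = 0`.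
-/

namespace LinearPMap

variable {𝕜 E G : Type*} [CommRing 𝕜] [AddCommGroup E] [Module 𝕜 E] [AddCommGroup G] [Module 𝕜 G]

def IsRightResolvent (T : E →ₗ.[𝕜] E) (z : 𝕜) (R : E → E) : Prop :=
  ∀ y : E, ∃ hy : R y ∈ T.domain, T ⟨R y, hy⟩ - z • R y = y

def IsLeftResolvent (T : E →ₗ.[𝕜] E) (z : 𝕜) (R : E → E) : Prop :=
  ∀ x : T.domain, R (T x - z • (x : E)) = x

variable {T : E →ₗ.[𝕜] E} {z w : 𝕜} {Rz Rw : E → E}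

theorem IsLeftResolvent.apply_add_smul (hRz : T.IsLeftResolvent z Rz)
    (hRw : T.IsRightResolvent w Rw) (y : E) : Rz (y + (w - z) • Rw y) = Rw y := by
  obtain ⟨hy, hTy⟩ := hRw y
  have harg : T ⟨Rw y, hy⟩ - z • Rw y = y + (w - z) • Rw y := by
    rw [sub_eq_iff_eq_add.mp hTy]
    module
  simpa only [harg] using hRz ⟨Rw y, hy⟩

theorem IsLeftResolvent.comp_apply_add_smul (hRz : T.IsLeftResolvent z Rz)
    (hRw : T.IsRightResolvent w Rw) {V : E →ₗ.[𝕜] G} (hdom : T.domain ≤ V.domain)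
    {Az Aw : E → G} (hAz : ∀ y (hy : Rz y ∈ V.domain), Az y = V ⟨Rz y, hy⟩)
    (hAw : ∀ y (hy : Rw y ∈ V.domain), Aw y = V ⟨Rw y, hy⟩) (y : E) :
    Aw y = Az (y + (w - z) • Rw y) := by
  have hmem : Rw y ∈ V.domain := hdom (hRw y).1
  have hmem' : Rz (y + (w - z) • Rw y) ∈ V.domain := by rwa [hRz.apply_add_smul hRw]
  rw [hAw y hmem, hAz _ hmem']
  congr 2
  exact (hRz.apply_add_smul hRw y).symm

theorem IsRightResolvent.exists_apply_eq_smul {ζ : 𝕜} {R : E → E} (hR : T.IsRightResolvent ζ R)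
    {f : E} (hf : (z - ζ) • R f = f) : ∃ hf : f ∈ T.domain, T ⟨f, hf⟩ = z • f := by
  obtain ⟨hRf, hTRf⟩ := hR f
  have hdom : f ∈ T.domain := hf ▸ T.domain.smul_mem (z - ζ) hRf
  refine ⟨hdom, ?_⟩
  calc T ⟨f, hdom⟩ = T ((z - ζ) • ⟨R f, hRf⟩) := by congr 1; exact Subtype.ext hf.symm
    _ = (z - ζ) • (f + ζ • R f) := by rw [T.map_smul, sub_eq_iff_eq_add.mp hTRf]
    _ = (z - ζ) • f + ζ • ((z - ζ) • R f) := by module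
    _ = z • f := by rw [hf]; module

end LinearPMap

section DenseExtension

variable {𝕜 E F G : Type*} [NormedField 𝕜]
  [NormedAddCommGroup E] [NormedSpace 𝕜 E] [NormedAddCommGroup F] [NormedSpace 𝕜 F]
  [NormedAddCommGroup G] [NormedSpace 𝕜 G]
  {T : E →ₗ.[𝕜] E} {S : F →ₗ.[𝕜] E} {z w : 𝕜} {Rz Rw : E →L[𝕜] E} {Bw : F →L[𝕜] E}

theorem resolvent_comp_sub_resolvent_comp (hS : Dense (S.domain : Set F))
    (hRz : T.IsLeftResolvent z Rz) (hRw : T.IsRightResolvent w Rw) {Bz : F →L[𝕜] E}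
    (hBz : ∀ x : S.domain, Bz x = Rz (S x)) (hBw : ∀ x : S.domain, Bw x = Rw (S x)) (k : F) :
    Bz k - Bw k = (z - w) • Rz (Bw k) := by
  have hdense : ∀ x : S.domain, Bz x - Bw x = (z - w) • Rz (Bw x) := by
    intro x
    have hres := hRz.apply_add_smul hRw (S x)
    rw [map_add, map_smul] at hres
    rw [hBz, hBw]
    linear_combination (norm := module) hres
  exact congrFun (Continuous.ext_on hS (f := fun k ↦ Bz k - Bw k)
    (g := fun k ↦ (z - w) • Rz (Bw k)) (by fun_prop) (by fun_prop) fun x hx ↦ hdense ⟨x, hx⟩) k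

theorem birmanSchwinger_sub_birmanSchwinger (hS : Dense (S.domain : Set F))
    (hRz : T.IsLeftResolvent z Rz) (hRw : T.IsRightResolvent w Rw)
    (hBw : ∀ x : S.domain, Bw x = Rw (S x))
    {V : E →ₗ.[𝕜] G} (hdom : T.domain ≤ V.domain) {Az Aw : E →L[𝕜] G}
    (hAz : ∀ y (hy : Rz y ∈ V.domain), Az y = V ⟨Rz y, hy⟩)
    (hAw : ∀ y (hy : Rw y ∈ V.domain), Aw y = V ⟨Rw y, hy⟩) {Kz Kw : F →L[𝕜] G}
    (hKz : ∀ x : S.domain, Kz x = -Az (S x)) (hKw : ∀ x : S.domain, Kw x = -Aw (S x)) (k : F) :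
    Kz k - Kw k = (w - z) • Az (Bw k) := by
  have hdense : ∀ x : S.domain, Kz x - Kw x = (w - z) • Az (Bw x) := by
    intro x
    rw [hKz, hKw, hBw, hRz.comp_apply_add_smul hRw hdom hAz hAw, map_add, map_smul]
    abel
  exact congrFun (Continuous.ext_on hS (f := fun k ↦ Kz k - Kw k)
    (g := fun k ↦ (w - z) • Az (Bw k)) (by fun_prop) (by fun_prop) fun x hx ↦ hdense ⟨x, hx⟩) k

end DenseExtension

theorem birmanSchwinger_eigenvalue_direction_general
    {H K : Type*} [NormedAddCommGroup H] [InnerProductSpace ℂ H] [CompleteSpace H]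
    [NormedAddCommGroup K] [InnerProductSpace ℂ K]
    (H₀ : H →ₗ.[ℂ] H)
    (V₁ : H →ₗ.[ℂ] K)
    (V₂ : H →ₗ.[ℂ] K)
    (hdomV₁ : H₀.domain ≤ V₁.domain)
    (hV₂adjDense : Dense ((LinearPMap.adjoint V₂).domain : Set K))
    (ρ : Set ℂ) (R₀ : ℂ → H →L[ℂ] H)
    (hR₀ : ∀ z ∈ ρ,
      (∀ y : H, ∃ hy : R₀ z y ∈ H₀.domain, H₀ ⟨R₀ z y, hy⟩ - z • R₀ z y = y) ∧
      (∀ x : H₀.domain, R₀ z (H₀ x - z • (x : H)) = (x : H)))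
    (V₁R₀ : ℂ → H →L[ℂ] K)
    (hV₁R₀ : ∀ z ∈ ρ, ∀ (y : H) (hy : R₀ z y ∈ V₁.domain),
      V₁R₀ z y = V₁ ⟨R₀ z y, hy⟩)
    (RV₂ : ℂ → K →L[ℂ] H)
    (hRV₂ : ∀ z ∈ ρ, ∀ g : (LinearPMap.adjoint V₂).domain,
      RV₂ z (g : K) = R₀ z (LinearPMap.adjoint V₂ g))
    (BS : ℂ → K →L[ℂ] K)
    (hBS : ∀ z ∈ ρ, ∀ g : (LinearPMap.adjoint V₂).domain,
      BS z (g : K) = -(V₁R₀ z (LinearPMap.adjoint V₂ g)))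
    (hζ₀ : ∃ ζ₀ ∈ ρ, IsUnit ((1 : K →L[ℂ] K) - BS ζ₀))
    (Hp : H →ₗ.[ℂ] H)
    (hHp : ∀ z ∈ ρ, ∀ W : K →L[ℂ] K,
      ((1 : K →L[ℂ] K) - BS z) ∘L W = 1 → W ∘L ((1 : K →L[ℂ] K) - BS z) = 1 →
      (∀ y : H, ∃ hy : (R₀ z - RV₂ z ∘L W ∘L V₁R₀ z) y ∈ Hp.domain,
          Hp ⟨(R₀ z - RV₂ z ∘L W ∘L V₁R₀ z) y, hy⟩
            - z • (R₀ z - RV₂ z ∘L W ∘L V₁R₀ z) y = y) ∧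
      (∀ x : Hp.domain, (R₀ z - RV₂ z ∘L W ∘L V₁R₀ z) (Hp x - z • (x : H)) = (x : H)))
    (z₀ : ℂ) (hz₀ : z₀ ∈ ρ) (g : K) (hg : g ≠ 0) (hKg : BS z₀ g = g) :
    -(RV₂ z₀ g) ≠ 0 ∧
    ∃ hf : -(RV₂ z₀ g) ∈ Hp.domain, Hp ⟨-(RV₂ z₀ g), hf⟩ = z₀ • (-(RV₂ z₀ g)) := by
  obtain ⟨ζ, hζ, u, hu⟩ := hζ₀
  set W : K →L[ℂ] K := ↑u⁻¹
  have hUW : ((1 : K →L[ℂ] K) - BS ζ) ∘L W = 1 := hu ▸ u.mul_inv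
  have hWU : W ∘L ((1 : K →L[ℂ] K) - BS ζ) = 1 := hu ▸ u.inv_mul
  have hRV₂ζ := resolvent_comp_sub_resolvent_comp hV₂adjDense (hR₀ ζ hζ).2 (hR₀ z₀ hz₀).1
    (hRV₂ ζ hζ) (hRV₂ z₀ hz₀) g
  have hBSζ := birmanSchwinger_sub_birmanSchwinger hV₂adjDense (hR₀ ζ hζ).2 (hR₀ z₀ hz₀).1
    (hRV₂ z₀ hz₀) hdomV₁ (hV₁R₀ ζ hζ) (hV₁R₀ z₀ hz₀) (hBS ζ hζ) (hBS z₀ hz₀) g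
  set f := -(RV₂ z₀ g) with hf
  have hUg : ((1 : K →L[ℂ] K) - BS ζ) g = (z₀ - ζ) • V₁R₀ ζ f := by
    rw [sub_apply, one_apply_eq_self, map_neg, smul_neg, ← hBSζ, hKg]
    abel
  have hWg : W ((z₀ - ζ) • V₁R₀ ζ f) = g := by
    rw [← hUg, ← ContinuousLinearMap.comp_apply, hWU, one_apply_eq_self]
  have hRf : (z₀ - ζ) • (R₀ ζ - RV₂ ζ ∘L W ∘L V₁R₀ ζ) f = f := by
    rw [sub_apply, ContinuousLinearMap.comp_apply, ContinuousLinearMap.comp_apply, smul_sub,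
      ← map_smul (RV₂ ζ), ← map_smul W, hWg, hf, map_neg, smul_neg]
    linear_combination (norm := module) -hRV₂ζ
  refine ⟨fun hf₀ ↦ hg ?_,
    LinearPMap.IsRightResolvent.exists_apply_eq_smul (hHp ζ hζ W hUW hWU).1 hRf⟩
  simpa [hf₀] using hWg.symm

/-- (Abstract Birman–Schwinger principle, eigenvalue direction.)
Under the Kato–Konno–Kuroda hypotheses, with `Hp` the closed operator `H` defined by the
Kato resolvent formula `(H - z)⁻¹ = R₀(z) - closure(R₀(z)V₂*) [I - K(z)]⁻¹ V₁R₀(z)`: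
if `z₀ ∈ ρ(H₀)` and `K(z₀) g = g` for some `g ≠ 0`, then
`f = -closure(R₀(z₀)V₂*) g` is a nonzero element of `dom H` with `H f = z₀ f`;
in particular `1 ∈ σ_p(K(z₀))` implies `z₀ ∈ σ_p(H)`. -/
theorem birmanSchwinger_eigenvalue_direction
    {H K : Type*} [NormedAddCommGroup H] [InnerProductSpace ℂ H] [CompleteSpace H]
    [NormedAddCommGroup K] [InnerProductSpace ℂ K] [CompleteSpace K]
    (H₀ : H →ₗ.[ℂ] H) (hH₀dense : Dense (H₀.domain : Set H)) (hH₀closed : H₀.IsClosed)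
    (V₁ : H →ₗ.[ℂ] K) (hV₁dense : Dense (V₁.domain : Set H)) (hV₁closed : V₁.IsClosed)
    (V₂ : H →ₗ.[ℂ] K) (hV₂dense : Dense (V₂.domain : Set H)) (hV₂closed : V₂.IsClosed)
    (hdomV₁ : H₀.domain ≤ V₁.domain)
    (hdomV₂ : (LinearPMap.adjoint H₀).domain ≤ V₂.domain)
    (hV₂adjDense : Dense ((LinearPMap.adjoint V₂).domain : Set K))
    (ρ : Set ℂ) (R₀ : ℂ → H →L[ℂ] H)
    (hR₀ : ∀ z ∈ ρ,
      (∀ y : H, ∃ hy : R₀ z y ∈ H₀.domain, H₀ ⟨R₀ z y, hy⟩ - z • R₀ z y = y) ∧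
      (∀ x : H₀.domain, R₀ z (H₀ x - z • (x : H)) = (x : H)))
    (V₁R₀ : ℂ → H →L[ℂ] K)
    (hV₁R₀ : ∀ z ∈ ρ, ∀ (y : H) (hy : R₀ z y ∈ V₁.domain),
      V₁R₀ z y = V₁ ⟨R₀ z y, hy⟩)
    (RV₂ : ℂ → K →L[ℂ] H)
    (hRV₂ : ∀ z ∈ ρ, ∀ g : (LinearPMap.adjoint V₂).domain,
      RV₂ z (g : K) = R₀ z (LinearPMap.adjoint V₂ g))
    (BS : ℂ → K →L[ℂ] K)
    (hBS : ∀ z ∈ ρ, ∀ g : (LinearPMap.adjoint V₂).domain,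
      BS z (g : K) = -(V₁R₀ z (LinearPMap.adjoint V₂ g)))
    (hζ₀ : ∃ ζ₀ ∈ ρ, IsUnit ((1 : K →L[ℂ] K) - BS ζ₀))
    (Hp : H →ₗ.[ℂ] H) (hHpdense : Dense (Hp.domain : Set H)) (hHpclosed : Hp.IsClosed)
    (hHp : ∀ z ∈ ρ, ∀ W : K →L[ℂ] K,
      ((1 : K →L[ℂ] K) - BS z) ∘L W = 1 → W ∘L ((1 : K →L[ℂ] K) - BS z) = 1 →
      (∀ y : H, ∃ hy : (R₀ z - RV₂ z ∘L W ∘L V₁R₀ z) y ∈ Hp.domain,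
          Hp ⟨(R₀ z - RV₂ z ∘L W ∘L V₁R₀ z) y, hy⟩
            - z • (R₀ z - RV₂ z ∘L W ∘L V₁R₀ z) y = y) ∧
      (∀ x : Hp.domain, (R₀ z - RV₂ z ∘L W ∘L V₁R₀ z) (Hp x - z • (x : H)) = (x : H)))
    (z₀ : ℂ) (hz₀ : z₀ ∈ ρ) (g : K) (hg : g ≠ 0) (hKg : BS z₀ g = g) :
    -(RV₂ z₀ g) ≠ 0 ∧
    ∃ hf : -(RV₂ z₀ g) ∈ Hp.domain, Hp ⟨-(RV₂ z₀ g), hf⟩ = z₀ • (-(RV₂ z₀ g)) :=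
  birmanSchwinger_eigenvalue_direction_general H₀ V₁ V₂ hdomV₁ hV₂adjDense ρ R₀ hR₀ V₁R₀ hV₁R₀ RV₂
    hRV₂ BS hBS hζ₀ Hp hHp z₀ hz₀ g hg hKg
end

section
/- (Abstract Birman–Schwinger principle, resolvent direction) Under the Kato–Konno–Kuroda hypotheses, for z₀ ∈ ρ(H₀) one has: z₀ ∈ ρ(H) if and only if 1 ∈ ρ(K(z₀)). Moreover, I_K - closure(V₁R(z)V₂*) = [I_K - K(z)]⁻¹ for z ∈ {ζ ∈ ρ(H₀) : 1 ∈ ρ(K(ζ))}. -/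
/-!
Kato's formula provides the resolvent of `H` wherever `1 - K(z)` is invertible, so only the
converse needs an argument. Fix `ζ` with `1 - K(ζ)` invertible and put `c = z - ζ`. The first
resolvent identity for `H₀` and the closedness of `V₁` give
`1 - K(z) = (1 - K(ζ)) (1 + c [1 - K(ζ)]⁻¹ V₁R₀(z) R₀(ζ)V₂*)`, while
`1 + c R₀(ζ)V₂* [1 - K(ζ)]⁻¹ V₁R₀(z) = (1 - c R(ζ)) (1 + c R₀(z))` is a product of units once
`z ∈ ρ(H)`, by the resolvent identity for `H`. Since `1 + UV` is invertible iff `1 + VU` is,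
`1 - K(z)` is invertible. The formula for `[1 - K(z)]⁻¹` is checked on the dense set `dom V₂*`,
where `R(z)V₂* g = R₀(z)V₂* [1 - K(z)]⁻¹ g` and `V₁ R₀(z)V₂* = -K(z)`.
-/

open ContinuousLinearMap

section

variable {𝕜 E F X : Type*} [NormedField 𝕜] [NormedAddCommGroup E] [NormedSpace 𝕜 E]
  [NormedAddCommGroup F] [NormedSpace 𝕜 F] [NormedAddCommGroup X] [NormedSpace 𝕜 X]

def LinearPMap.IsResolvent_s11 (T : E →ₗ.[𝕜] E) (z : 𝕜) (R : E →L[𝕜] E) : Prop :=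
  (∀ y : E, ∃ hy : R y ∈ T.domain, T ⟨R y, hy⟩ - z • R y = y) ∧
    ∀ x : T.domain, R (T x - z • (x : E)) = x

variable {T : E →ₗ.[𝕜] E} {z w : 𝕜} {Rz Rw : E →L[𝕜] E}

theorem LinearPMap.IsResolvent_s11.eq_add_smul_comp (hz : T.IsResolvent_s11 z Rz)
    (hw : T.IsResolvent_s11 w Rw) : Rw = Rz + (w - z) • (Rz ∘L Rw) := by
  ext y
  obtain ⟨hy, hTy⟩ := hw.1 y
  have h := hz.2 ⟨Rw y, hy⟩
  rw [eq_add_of_sub_eq hTy] at h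
  simp only [_root_.map_sub, _root_.map_add, _root_.map_smul] at h
  simp only [_root_.add_apply, _root_.smul_apply, ContinuousLinearMap.comp_apply]
  linear_combination (norm := module) -h

theorem LinearPMap.IsResolvent_s11.eq_add_smul_comp' (hz : T.IsResolvent_s11 z Rz)
    (hw : T.IsResolvent_s11 w Rw) : Rw = Rz + (w - z) • (Rw ∘L Rz) := by
  linear_combination (norm := module) -hw.eq_add_smul_comp hz

theorem LinearPMap.IsResolvent_s11.one_sub_smul_mul_one_add_smul (hz : T.IsResolvent_s11 z Rz)
    (hw : T.IsResolvent_s11 w Rw) : (1 - (w - z) • Rz) * (1 + (w - z) • Rw) = 1 := by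
  ext y
  have h := congr($(hz.eq_add_smul_comp hw) y)
  simp only [_root_.add_apply, _root_.smul_apply, ContinuousLinearMap.comp_apply] at h
  simp only [mul_apply_eq_comp, _root_.sub_apply, _root_.add_apply, _root_.smul_apply,
    one_apply_eq_self, _root_.map_add, _root_.map_smul]
  linear_combination (norm := module) (w - z) • h

theorem LinearPMap.IsResolvent_s11.one_add_smul_mul_one_sub_smul (hz : T.IsResolvent_s11 z Rz)
    (hw : T.IsResolvent_s11 w Rw) : (1 + (w - z) • Rw) * (1 - (w - z) • Rz) = 1 := by
  have h := hw.one_sub_smul_mul_one_add_smul hz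
  rwa [← neg_sub w z, neg_smul, neg_smul, sub_neg_eq_add, ← sub_eq_add_neg] at h

theorem LinearPMap.IsResolvent_s11.isUnit_one_add_smul (hz : T.IsResolvent_s11 z Rz)
    (hw : T.IsResolvent_s11 w Rw) : IsUnit (1 + (w - z) • Rw) :=
  ⟨⟨_, _, hz.one_add_smul_mul_one_sub_smul hw, hz.one_sub_smul_mul_one_add_smul hw⟩, rfl⟩

theorem LinearPMap.IsResolvent_s11.isUnit_one_sub_smul (hz : T.IsResolvent_s11 z Rz)
    (hw : T.IsResolvent_s11 w Rw) : IsUnit (1 - (w - z) • Rz) :=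
  ⟨⟨_, _, hz.one_sub_smul_mul_one_add_smul hw, hz.one_add_smul_mul_one_sub_smul hw⟩, rfl⟩

/-- `T.IsComp A B` says that `A` maps into the domain of `T` and `B = T ∘ A`. -/
def LinearPMap.IsComp (T : E →ₗ.[𝕜] F) (A : X →L[𝕜] E) (B : X →L[𝕜] F) : Prop :=
  ∀ x, (A x, B x) ∈ T.graph

namespace LinearPMap.IsComp

variable {T : E →ₗ.[𝕜] F} {A A' : X →L[𝕜] E} {B B' : X →L[𝕜] F}

theorem add (h : T.IsComp A B) (h' : T.IsComp A' B') : T.IsComp (A + A') (B + B') :=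
  fun x => T.graph.add_mem (h x) (h' x)

theorem smul (h : T.IsComp A B) (c : 𝕜) : T.IsComp (c • A) (c • B) :=
  fun x => T.graph.smul_mem c (h x)

theorem comp {Y : Type*} [NormedAddCommGroup Y] [NormedSpace 𝕜 Y] (h : T.IsComp A B)
    (C : Y →L[𝕜] X) : T.IsComp (A ∘L C) (B ∘L C) :=
  fun y => h (C y)

theorem unique (h : T.IsComp A B) (h' : T.IsComp A' B') (hA : A = A') : B = B' :=
  ContinuousLinearMap.ext fun x => T.mem_graph_snd_inj (h x) (h' x) (by rw [hA])

theorem of_dense (hT : T.IsClosed) {D : Set X} (hD : Dense D)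
    (h : ∀ x ∈ D, (A x, B x) ∈ T.graph) : T.IsComp A B := by
  intro x
  have hcont : Continuous fun x => (A x, B x) := A.continuous.prodMk B.continuous
  have := Set.MapsTo.closure h hcont (hD.closure_eq ▸ Set.mem_univ x)
  rwa [hT.closure_eq] at this

theorem of_dense_comp {G : Type*} [NormedAddCommGroup G] [NormedSpace 𝕜 G] {S : G →ₗ.[𝕜] X}
    (hT : T.IsClosed) (hS : Dense (S.domain : Set G)) (h : T.IsComp A B) {A' : G →L[𝕜] E}
    {B' : G →L[𝕜] F} (hA' : ∀ g : S.domain, A' g = A (S g))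
    (hB' : ∀ g : S.domain, B' g = B (S g)) : T.IsComp A' B' :=
  of_dense hT hS fun g hg => by
    rw [hA' ⟨g, hg⟩, hB' ⟨g, hg⟩]
    exact h _

end LinearPMap.IsComp

theorem ContinuousLinearMap.isUnit_one_add_comp_comm {U : F →L[𝕜] E} {V : E →L[𝕜] F}
    (h : IsUnit (1 + U ∘L V)) : IsUnit (1 + V ∘L U) := by
  set Q := (↑h.unit⁻¹ : E →L[𝕜] E)
  refine ⟨⟨_, 1 - V ∘L Q ∘L U, ?_, ?_⟩, rfl⟩
  · ext g
    have hQ := congr(V ($(h.mul_val_inv) (U g)))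
    simp only [mul_apply_eq_comp, add_apply, one_apply_eq_self, comp_apply, map_add] at hQ
    simp only [mul_apply_eq_comp, add_apply, sub_apply, one_apply_eq_self, comp_apply, map_sub]
    linear_combination (norm := module) -hQ
  · ext g
    have hQ := congr(V ($(h.val_inv_mul) (U g)))
    simp only [mul_apply_eq_comp, add_apply, one_apply_eq_self, comp_apply, map_add] at hQ
    simp only [mul_apply_eq_comp, add_apply, sub_apply, one_apply_eq_self, comp_apply, map_add]
    linear_combination (norm := module) -hQ

theorem isUnit_one_sub_of_isResolvent_kato {H₀ Hp : E →ₗ.[𝕜] E} {V₁ : E →ₗ.[𝕜] F}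
    {S : F →ₗ.[𝕜] E} (hS : Dense (S.domain : Set F)) {ρ : Set 𝕜} {R₀ : 𝕜 → E →L[𝕜] E}
    {L : 𝕜 → E →L[𝕜] F} {U : 𝕜 → F →L[𝕜] E} {B : 𝕜 → F →L[𝕜] F}
    (hR₀ : ∀ w ∈ ρ, H₀.IsResolvent_s11 w (R₀ w)) (hL : ∀ w ∈ ρ, V₁.IsComp (R₀ w) (L w))
    (hU : ∀ w ∈ ρ, V₁.IsComp (U w) (-B w)) (hSU : ∀ w ∈ ρ, ∀ g : S.domain, U w g = R₀ w (S g))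
    {ζ z : 𝕜} (hζ : ζ ∈ ρ) (hz : z ∈ ρ) {W : F →L[𝕜] F} (hW₁ : (1 - B ζ) * W = 1)
    (hW₂ : W * (1 - B ζ) = 1) (hRζ : Hp.IsResolvent_s11 ζ (R₀ ζ - U ζ ∘L W ∘L L ζ))
    {Rz : E →L[𝕜] E} (hRz : Hp.IsResolvent_s11 z Rz) : IsUnit (1 - B z) := by
  set c := z - ζ
  have hR₀z : R₀ ζ ∘L (1 + c • R₀ z) = R₀ z := by
    rw [comp_add, comp_smul, one_def, comp_id, ← (hR₀ ζ hζ).eq_add_smul_comp (hR₀ z hz)]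
  have hLz : L ζ ∘L (1 + c • R₀ z) = L z := ((hL ζ hζ).comp _).unique (hL z hz) hR₀z
  have hUz : U z = U ζ + c • R₀ z ∘L U ζ :=
    ext_on (by rwa [Submodule.span_eq]) fun g hg => by
      simp only [add_apply, smul_apply, comp_apply, hSU z hz ⟨g, hg⟩, hSU ζ hζ ⟨g, hg⟩]
      exact congr($((hR₀ ζ hζ).eq_add_smul_comp' (hR₀ z hz)) (S ⟨g, hg⟩))
  have hBz : -B z = -B ζ + c • (L z ∘L U ζ) :=
    (hU z hz).unique ((hU ζ hζ).add (((hL z hz).comp (U ζ)).smul c)) hUz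
  have hfac₁ : (1 - c • (R₀ ζ - U ζ ∘L W ∘L L ζ)) * (1 + c • R₀ z) =
      1 + U ζ ∘L (c • W ∘L L z) := by
    ext y
    have hres := congr($((hR₀ ζ hζ).one_sub_smul_mul_one_add_smul (hR₀ z hz)) y)
    have hLy := congr(U ζ (W ($hLz y)))
    simp only [mul_apply_eq_comp, sub_apply, add_apply, smul_apply, one_apply_eq_self,
      comp_apply, map_add, map_smul] at hres hLy ⊢
    linear_combination (norm := module) hres + c • hLy
  have hfac₂ : 1 - B z = (1 - B ζ) * (1 + (c • W ∘L L z) ∘L U ζ) := by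
    ext g
    have hW := congr($hW₁ (L z (U ζ g)))
    have hBg := congr($hBz g)
    simp only [mul_apply_eq_comp, sub_apply, add_apply, smul_apply, one_apply_eq_self,
      comp_apply, neg_apply, map_add, map_smul] at hW hBg ⊢
    linear_combination (norm := module) hBg - c • hW
  rw [hfac₂]
  refine (Units.mk _ W hW₁ hW₂).isUnit.mul (isUnit_one_add_comp_comm ?_)
  rw [← hfac₁]
  exact (hRζ.isUnit_one_sub_smul hRz).mul ((hR₀ ζ hζ).isUnit_one_add_smul (hR₀ z hz))

theorem one_sub_eq_of_isComp_kato {V₁ : E →ₗ.[𝕜] F} {S : F →ₗ.[𝕜] E}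
    (hS : Dense (S.domain : Set F)) {R₀ : E →L[𝕜] E} {U : F →L[𝕜] E} {L : E →L[𝕜] F}
    {B W V : F →L[𝕜] F} (hU : V₁.IsComp U (-B)) (hSU : ∀ g : S.domain, U g = R₀ (S g))
    (hSB : ∀ g : S.domain, B g = -L (S g)) (hW₁ : (1 - B) * W = 1) (hW₂ : W * (1 - B) = 1)
    (hV : ∀ (g : S.domain) (h : (R₀ - U ∘L W ∘L L) (S g) ∈ V₁.domain), V g = V₁ ⟨_, h⟩) :
    1 - V = W := by
  have hRS : ∀ g : S.domain, (R₀ - U ∘L W ∘L L) (S g) = U (W g) := fun g => by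
    have h := congr(U ($hW₂ g))
    have hL : L (S g) = -B g := by rw [hSB, neg_neg]
    simp only [mul_apply_eq_comp, sub_apply, one_apply_eq_self, map_sub] at h
    simp only [sub_apply, comp_apply, ← hSU, hL, map_neg]
    linear_combination (norm := module) -h
  have hVB : V = -(B ∘L W) := ext_on (by rwa [Submodule.span_eq]) fun g hg => by
    obtain ⟨y, hy, hVy⟩ := V₁.mem_graph_iff.1 (hU (W g))
    dsimp only at hy hVy
    have hm : (R₀ - U ∘L W ∘L L) (S ⟨g, hg⟩) ∈ V₁.domain := by rw [hRS, ← hy]; exact y.2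
    rw [hV ⟨g, hg⟩ hm, show (⟨_, hm⟩ : V₁.domain) = y from Subtype.ext ((hRS _).trans hy.symm),
      hVy]
    rfl
  have hW : W - B * W = 1 := by rw [← hW₁, sub_mul, one_mul]
  rw [hVB, sub_neg_eq_add, ← hW]
  exact sub_add_cancel W (B * W)

end

theorem birmanSchwinger_resolvent_direction_general
    {H K : Type*} [NormedAddCommGroup H] [InnerProductSpace ℂ H] [CompleteSpace H]
    [NormedAddCommGroup K] [InnerProductSpace ℂ K]
    (H₀ : H →ₗ.[ℂ] H)
    (V₁ : H →ₗ.[ℂ] K) (hV₁closed : V₁.IsClosed)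
    (V₂ : H →ₗ.[ℂ] K)
    (hdomV₁ : H₀.domain ≤ V₁.domain)
    (hV₂adjDense : Dense ((LinearPMap.adjoint V₂).domain : Set K))
    (ρ : Set ℂ) (R₀ : ℂ → H →L[ℂ] H)
    (hR₀ : ∀ z ∈ ρ,
      (∀ y : H, ∃ hy : R₀ z y ∈ H₀.domain, H₀ ⟨R₀ z y, hy⟩ - z • R₀ z y = y) ∧
      (∀ x : H₀.domain, R₀ z (H₀ x - z • (x : H)) = (x : H)))
    (V₁R₀ : ℂ → H →L[ℂ] K)
    (hV₁R₀ : ∀ z ∈ ρ, ∀ (y : H) (hy : R₀ z y ∈ V₁.domain),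
      V₁R₀ z y = V₁ ⟨R₀ z y, hy⟩)
    (RV₂ : ℂ → K →L[ℂ] H)
    (hRV₂ : ∀ z ∈ ρ, ∀ g : (LinearPMap.adjoint V₂).domain,
      RV₂ z (g : K) = R₀ z (LinearPMap.adjoint V₂ g))
    (BS : ℂ → K →L[ℂ] K)
    (hBS : ∀ z ∈ ρ, ∀ g : (LinearPMap.adjoint V₂).domain,
      BS z (g : K) = -(V₁R₀ z (LinearPMap.adjoint V₂ g)))
    (hζ₀ : ∃ ζ₀ ∈ ρ, IsUnit ((1 : K →L[ℂ] K) - BS ζ₀))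
    (Hp : H →ₗ.[ℂ] H)
    (hHp : ∀ z ∈ ρ, ∀ W : K →L[ℂ] K,
      ((1 : K →L[ℂ] K) - BS z) ∘L W = 1 → W ∘L ((1 : K →L[ℂ] K) - BS z) = 1 →
      (∀ y : H, ∃ hy : (R₀ z - RV₂ z ∘L W ∘L V₁R₀ z) y ∈ Hp.domain,
          Hp ⟨(R₀ z - RV₂ z ∘L W ∘L V₁R₀ z) y, hy⟩
            - z • (R₀ z - RV₂ z ∘L W ∘L V₁R₀ z) y = y) ∧
      (∀ x : Hp.domain, (R₀ z - RV₂ z ∘L W ∘L V₁R₀ z) (Hp x - z • (x : H)) = (x : H)))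
    (VRV : ℂ → K →L[ℂ] K)
    (hVRV : ∀ z ∈ ρ, ∀ W : K →L[ℂ] K,
      ((1 : K →L[ℂ] K) - BS z) ∘L W = 1 → W ∘L ((1 : K →L[ℂ] K) - BS z) = 1 →
      ∀ (g : (LinearPMap.adjoint V₂).domain)
        (h : (R₀ z - RV₂ z ∘L W ∘L V₁R₀ z) (LinearPMap.adjoint V₂ g) ∈ V₁.domain),
        VRV z (g : K) = V₁ ⟨(R₀ z - RV₂ z ∘L W ∘L V₁R₀ z) (LinearPMap.adjoint V₂ g), h⟩)
    (z₀ : ℂ) (hz₀ : z₀ ∈ ρ) :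
    ((∃ Rz : H →L[ℂ] H,
        (∀ y : H, ∃ hy : Rz y ∈ Hp.domain, Hp ⟨Rz y, hy⟩ - z₀ • Rz y = y) ∧
        (∀ x : Hp.domain, Rz (Hp x - z₀ • (x : H)) = (x : H)))
      ↔ IsUnit ((1 : K →L[ℂ] K) - BS z₀)) ∧
    (∀ z ∈ ρ, ∀ W : K →L[ℂ] K,
      ((1 : K →L[ℂ] K) - BS z) ∘L W = 1 → W ∘L ((1 : K →L[ℂ] K) - BS z) = 1 →
      (1 : K →L[ℂ] K) - VRV z = W) := by
  have hL : ∀ z ∈ ρ, V₁.IsComp (R₀ z) (V₁R₀ z) := fun z hz y => by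
    have hy := hdomV₁ ((hR₀ z hz).1 y).1
    rw [hV₁R₀ z hz y hy]
    exact V₁.mem_graph ⟨_, hy⟩
  have hU : ∀ z ∈ ρ, V₁.IsComp (RV₂ z) (-BS z) := fun z hz =>
    (hL z hz).of_dense_comp hV₁closed hV₂adjDense (hRV₂ z hz) fun g => by
      rw [neg_apply, hBS z hz g, neg_neg]
  refine ⟨⟨fun ⟨Rz, hRz⟩ => ?_, fun hu => ⟨_, hHp z₀ hz₀ _ hu.mul_val_inv hu.val_inv_mul⟩⟩,
    fun z hz W hW₁ hW₂ => one_sub_eq_of_isComp_kato hV₂adjDense (hU z hz) (hRV₂ z hz) (hBS z hz)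
      hW₁ hW₂ (hVRV z hz W hW₁ hW₂)⟩
  obtain ⟨ζ, hζ, ⟨⟨_, W, hW₁, hW₂⟩, rfl⟩⟩ := hζ₀
  exact isUnit_one_sub_of_isResolvent_kato hV₂adjDense hR₀ hL hU hRV₂ hζ hz₀ hW₁ hW₂
    (hHp ζ hζ W hW₁ hW₂) hRz

/-- (Abstract Birman–Schwinger principle, resolvent direction.)
Under the Kato–Konno–Kuroda hypotheses, with `Hp` the operator `H` defined by the Kato
resolvent formula: for `z₀ ∈ ρ(H₀)`, one has `z₀ ∈ ρ(H)` if and only if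
`1 ∈ ρ(K(z₀))`, i.e. iff `I - K(z₀)` is boundedly invertible.  Moreover,
`I_K - closure(V₁ R(z) V₂*) = [I_K - K(z)]⁻¹` for all `z ∈ ρ(H₀)` with
`1 ∈ ρ(K(z))`, where `VRV z` denotes the bounded closure of `V₁ R(z) V₂*` and
`R(z) = R₀(z) - closure(R₀(z)V₂*)[I - K(z)]⁻¹ V₁R₀(z)`. -/
theorem birmanSchwinger_resolvent_direction
    {H K : Type*} [NormedAddCommGroup H] [InnerProductSpace ℂ H] [CompleteSpace H]
    [NormedAddCommGroup K] [InnerProductSpace ℂ K] [CompleteSpace K]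
    (H₀ : H →ₗ.[ℂ] H) (hH₀dense : Dense (H₀.domain : Set H)) (hH₀closed : H₀.IsClosed)
    (V₁ : H →ₗ.[ℂ] K) (hV₁dense : Dense (V₁.domain : Set H)) (hV₁closed : V₁.IsClosed)
    (V₂ : H →ₗ.[ℂ] K) (hV₂dense : Dense (V₂.domain : Set H)) (hV₂closed : V₂.IsClosed)
    (hdomV₁ : H₀.domain ≤ V₁.domain)
    (hdomV₂ : (LinearPMap.adjoint H₀).domain ≤ V₂.domain)
    (hV₂adjDense : Dense ((LinearPMap.adjoint V₂).domain : Set K))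
    (ρ : Set ℂ) (R₀ : ℂ → H →L[ℂ] H)
    (hR₀ : ∀ z ∈ ρ,
      (∀ y : H, ∃ hy : R₀ z y ∈ H₀.domain, H₀ ⟨R₀ z y, hy⟩ - z • R₀ z y = y) ∧
      (∀ x : H₀.domain, R₀ z (H₀ x - z • (x : H)) = (x : H)))
    (V₁R₀ : ℂ → H →L[ℂ] K)
    (hV₁R₀ : ∀ z ∈ ρ, ∀ (y : H) (hy : R₀ z y ∈ V₁.domain),
      V₁R₀ z y = V₁ ⟨R₀ z y, hy⟩)
    (RV₂ : ℂ → K →L[ℂ] H)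
    (hRV₂ : ∀ z ∈ ρ, ∀ g : (LinearPMap.adjoint V₂).domain,
      RV₂ z (g : K) = R₀ z (LinearPMap.adjoint V₂ g))
    (BS : ℂ → K →L[ℂ] K)
    (hBS : ∀ z ∈ ρ, ∀ g : (LinearPMap.adjoint V₂).domain,
      BS z (g : K) = -(V₁R₀ z (LinearPMap.adjoint V₂ g)))
    (hζ₀ : ∃ ζ₀ ∈ ρ, IsUnit ((1 : K →L[ℂ] K) - BS ζ₀))
    (Hp : H →ₗ.[ℂ] H) (hHpdense : Dense (Hp.domain : Set H)) (hHpclosed : Hp.IsClosed)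
    (hHp : ∀ z ∈ ρ, ∀ W : K →L[ℂ] K,
      ((1 : K →L[ℂ] K) - BS z) ∘L W = 1 → W ∘L ((1 : K →L[ℂ] K) - BS z) = 1 →
      (∀ y : H, ∃ hy : (R₀ z - RV₂ z ∘L W ∘L V₁R₀ z) y ∈ Hp.domain,
          Hp ⟨(R₀ z - RV₂ z ∘L W ∘L V₁R₀ z) y, hy⟩
            - z • (R₀ z - RV₂ z ∘L W ∘L V₁R₀ z) y = y) ∧
      (∀ x : Hp.domain, (R₀ z - RV₂ z ∘L W ∘L V₁R₀ z) (Hp x - z • (x : H)) = (x : H)))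
    (VRV : ℂ → K →L[ℂ] K)
    (hVRV : ∀ z ∈ ρ, ∀ W : K →L[ℂ] K,
      ((1 : K →L[ℂ] K) - BS z) ∘L W = 1 → W ∘L ((1 : K →L[ℂ] K) - BS z) = 1 →
      ∀ (g : (LinearPMap.adjoint V₂).domain)
        (h : (R₀ z - RV₂ z ∘L W ∘L V₁R₀ z) (LinearPMap.adjoint V₂ g) ∈ V₁.domain),
        VRV z (g : K) = V₁ ⟨(R₀ z - RV₂ z ∘L W ∘L V₁R₀ z) (LinearPMap.adjoint V₂ g), h⟩)
    (z₀ : ℂ) (hz₀ : z₀ ∈ ρ) :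
    ((∃ Rz : H →L[ℂ] H,
        (∀ y : H, ∃ hy : Rz y ∈ Hp.domain, Hp ⟨Rz y, hy⟩ - z₀ • Rz y = y) ∧
        (∀ x : Hp.domain, Rz (Hp x - z₀ • (x : H)) = (x : H)))
      ↔ IsUnit ((1 : K →L[ℂ] K) - BS z₀)) ∧
    (∀ z ∈ ρ, ∀ W : K →L[ℂ] K,
      ((1 : K →L[ℂ] K) - BS z) ∘L W = 1 → W ∘L ((1 : K →L[ℂ] K) - BS z) = 1 →
      (1 : K →L[ℂ] K) - VRV z = W) :=
  birmanSchwinger_resolvent_direction_general H₀ V₁ hV₁closed V₂ hdomV₁ hV₂adjDense ρ R₀ hR₀ V₁R₀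
    hV₁R₀ RV₂ hRV₂ BS hBS hζ₀ Hp hHp VRV hVRV z₀ hz₀
end
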